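/- Assume A is an algebra over the field 𝔽_p for a prime p, let e ≥ 0 be an integer, d = p^e, and let φ_d : A((t)) → A((t)) be the ring homomorphism fixing A and sending t to t^d. Then for every g ∈ SL_N(A((t))) with g ∉ SL_N(A[[t]]), one has φ_{d,*}(g) ∉ SL_N(A[[t]]) and Σ(φ_{d,*}(g)) = Σ(g); in particular r(φ_{d,*}(g)) = r(g). -/

import Mathlib

/-!
Setup for indices and residues of elements of `SL_N(A((t)))`, following
Florence–Gille, "Residues on affine grassmannians".

* `mkL` builds a Laurent series from a coefficient function (junk `0` if the support is
  not well ordered; in all uses the support is bounded below).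
* `subst φ w` is the substitution map `A((t)) → B((s))`, `∑ aᵢ tⁱ ↦ ∑ φ(aᵢ) wⁱ`,
  computed coefficientwise.
* `SigmaSet g` is the set `Σ(g)` of the paper.
-/

noncomputable section

open Polynomial HahnSeries

namespace ResidueIndex

variable {A : Type*} [CommRing A] {B : Type*} [CommRing B] {N : ℕ}

/-- Build a Laurent series from a coefficient function (junk value `0` if the support is
not partially well ordered; in all uses below the support is bounded below, so this is
the Laurent series with the given coefficients). -/
def mkL (f : ℤ → B) : LaurentSeries B :=
  letI := Classical.dec ((Function.support f).IsPWO)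
  if h : (Function.support f).IsPWO then ⟨f, h⟩ else 0

/-- Total integer power in `B((s))`: the genuine `z ^ i` for `i ≥ 0`, and `(z⁻¹) ^ (-i)`
(via `Ring.inverse`) for `i < 0`; meaningful whenever `z` is a unit. -/
def zpow' (z : LaurentSeries B) (i : ℤ) : LaurentSeries B :=
  if 0 ≤ i then z ^ i.toNat else Ring.inverse z ^ (-i).toNat

/-- The substitution map `A((t)) → B((s))` determined by the coefficient homomorphism
`φ : A → B` and `t ↦ w`: it sends `∑ aᵢ tⁱ` to `∑ φ(aᵢ) wⁱ` (computed coefficientwise). -/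
def subst (φ : A →+* B) (w : LaurentSeries B) (x : LaurentSeries A) : LaurentSeries B :=
  mkL fun k => ∑ᶠ i : ℤ, φ (x.coeff i) * (zpow' w i).coeff k

/-- `x` lies in the power series subring `B[[t]] ⊆ B((t))`. -/
def IsPS (x : LaurentSeries B) : Prop := ∀ i : ℤ, i < 0 → x.coeff i = 0

variable (A) in
/-- `ι_n : A((t)) → (A[u])((s))`: inclusion on coefficients, `t ↦ sⁿ`. -/
def iotaF (n : ℕ) : LaurentSeries A → LaurentSeries (Polynomial A) :=
  subst (Polynomial.C) (HahnSeries.single (n : ℤ) 1)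

variable (A) in
/-- `σ_{m,n} : A((t)) → (A[u])((s))`: inclusion on coefficients,
`t ↦ sⁿ(1 + u sᵐ) = sⁿ + u s^{n+m}`. -/
def sigmaF (m n : ℕ) : LaurentSeries A → LaurentSeries (Polynomial A) :=
  subst (Polynomial.C)
    (HahnSeries.single (n : ℤ) 1 + HahnSeries.single ((n : ℤ) + (m : ℤ)) Polynomial.X)

/-- The matrix `ι_n(g)⁻¹ · σ_{m,n}(g)` (the matrix inverse is the nonsingular inverse,
which is the genuine inverse since `det (ι_n(g)) = 1`). -/
def hmat (g : Matrix (Fin N) (Fin N) (LaurentSeries A)) (m n : ℕ) :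
    Matrix (Fin N) (Fin N) (LaurentSeries (Polynomial A)) :=
  (g.map (iotaF A n))⁻¹ * g.map (sigmaF A m n)

/-- `Σ(g)`: the set of positive rationals `r = m/n` (written in lowest terms) such that
all entries of `ι_n(g)⁻¹ σ_{m,n}(g)` are power series. -/
def SigmaSet (g : Matrix (Fin N) (Fin N) (LaurentSeries A)) : Set ℚ :=
  {r : ℚ | 0 < r ∧ ∀ i j, IsPS (hmat g r.num.toNat r.den i j)}

variable (A) in
/-- `ι : A((t)) → (A[λ,λ⁻¹])((t))`: inclusion on coefficients, `t ↦ t`. -/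
def iotaL : LaurentSeries A → LaurentSeries (LaurentPolynomial A) :=
  subst (LaurentPolynomial.C) (HahnSeries.single (1 : ℤ) 1)

variable (A) in
/-- `σ₀ : A((t)) → (A[λ,λ⁻¹])((t))`: inclusion on coefficients, `t ↦ λt`. -/
def sigmaL : LaurentSeries A → LaurentSeries (LaurentPolynomial A) :=
  subst (LaurentPolynomial.C) (HahnSeries.single (1 : ℤ) (LaurentPolynomial.T 1))

/-- The matrix `ι(g)⁻¹ · σ₀(g)`. -/
def lmat (g : Matrix (Fin N) (Fin N) (LaurentSeries A)) :
    Matrix (Fin N) (Fin N) (LaurentSeries (LaurentPolynomial A)) :=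
  (g.map (iotaL A))⁻¹ * g.map (sigmaL A)

/-- The coefficientwise base change `A((t)) → B((t))` along `φ : A → B` (`t ↦ t`). -/
def baseF (φ : A →+* B) : LaurentSeries A → LaurentSeries B :=
  subst φ (HahnSeries.single (1 : ℤ) 1)

variable (A) in
/-- `φ_d : A((t)) → A((t))`, fixing `A` and sending `t` to `t^d`. -/
def phiD (d : ℕ) : LaurentSeries A → LaurentSeries A :=
  subst (RingHom.id A) (HahnSeries.single (d : ℤ) 1)

/-- Constant term (evaluation at `t = 0`) applied entrywise to a matrix of Laurent
series; this is the map `j` when the entries are power series. -/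
def jmat (M : Matrix (Fin N) (Fin N) (LaurentSeries B)) : Matrix (Fin N) (Fin N) B :=
  Matrix.of fun i j => (M i j).coeff 0

/-- The matrix `ι_n(g)⁻¹ · σ_f(g)` for a general substitution `σ_f : t ↦ f`,
`f ∈ (A[u])[[s]]`. -/
def hmatF (g : Matrix (Fin N) (Fin N) (LaurentSeries A)) (n : ℕ)
    (f : PowerSeries (Polynomial A)) :
    Matrix (Fin N) (Fin N) (LaurentSeries (Polynomial A)) :=
  (g.map (iotaF A n))⁻¹ *
    g.map (subst Polynomial.C ((HahnSeries.ofPowerSeries ℤ (Polynomial A)) f))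

variable (N) in
/-- Membership in the closed subgroup scheme `G ⊆ SL_N` cut out by the set `S` of
polynomials in the matrix entries, at the commutative `A`-algebra `B`. -/
def Gmem (S : Set (MvPolynomial (Fin N × Fin N) A)) (B : Type*) [CommRing B] [Algebra A B]
    (M : Matrix (Fin N) (Fin N) B) : Prop :=
  M.det = 1 ∧ ∀ p ∈ S, MvPolynomial.aeval (fun q : Fin N × Fin N => M q.1 q.2) p = 0

/-- `M = M(u) ∈ SL_N(A[u])` satisfies `M(X+Y) = M(X)·M(Y)` in `SL_N(A[X,Y])`
(with `A[X,Y] = MvPolynomial (Fin 2) A`); i.e. `M` is a homomorphism `𝔾_a → SL_N`. -/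
def IsAddHomMat (M : Matrix (Fin N) (Fin N) (Polynomial A)) : Prop :=
  M.map ⇑(Polynomial.aeval (MvPolynomial.X 0 + MvPolynomial.X 1 : MvPolynomial (Fin 2) A))
    = M.map ⇑(Polynomial.aeval (MvPolynomial.X 0 : MvPolynomial (Fin 2) A))
      * M.map ⇑(Polynomial.aeval (MvPolynomial.X 1 : MvPolynomial (Fin 2) A))

/-- The `A`-algebra map `A[λ,λ⁻¹] → D` sending `λ` to the unit `u`. -/
def lpHom {D : Type*} [CommRing D] [Algebra A D] (u : Dˣ) : LaurentPolynomial A →ₐ[A] D :=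
  (AddMonoidAlgebra.lift A D ℤ) ((Units.coeHom D).comp (zpowersHom Dˣ u))

variable (A) in
/-- The unit `λ` of `A[λ^{±1}, μ^{±1}] = (A[μ,μ⁻¹])[λ,λ⁻¹]`. -/
def unitLam : (LaurentPolynomial (LaurentPolynomial A))ˣ :=
  (LaurentPolynomial.isUnit_T 1).unit

variable (A) in
/-- The unit `μ` of `A[λ^{±1}, μ^{±1}] = (A[μ,μ⁻¹])[λ,λ⁻¹]`. -/
def unitMu : (LaurentPolynomial (LaurentPolynomial A))ˣ :=
  Units.map (LaurentPolynomial.C (R := LaurentPolynomial A)).toMonoidHom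
    (LaurentPolynomial.isUnit_T 1).unit

/-- `M = M(λ) ∈ SL_N(A[λ,λ⁻¹])` satisfies `M(λμ) = M(λ)·M(μ)` in
`SL_N(A[λ^{±1},μ^{±1}])`; i.e. `M` is a homomorphism `𝔾_m → SL_N`. -/
def IsMulHomMat (M : Matrix (Fin N) (Fin N) (LaurentPolynomial A)) : Prop :=
  M.map ⇑(lpHom (unitLam A * unitMu A))
    = M.map ⇑(lpHom (unitLam A)) * M.map ⇑(lpHom (unitMu A))

/-- Composition (substitution) of formal power series: `pcomp f h = f ∘ h`, the series
obtained by substituting `h` for `t` in `f`; meaningful when `h` has zero constant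
coefficient. -/
def pcomp (f h : PowerSeries B) : PowerSeries B :=
  PowerSeries.mk fun k =>
    ∑ i ∈ Finset.range (k + 1), PowerSeries.coeff (R := B) i f * PowerSeries.coeff (R := B) k (h ^ i)

variable (B) in
/-- `J^w(B) = {f ∈ B[[t]] : f ≡ t (mod t^{w+1})}`. -/
def Jset (w : ℕ) : Set (PowerSeries B) :=
  {f | ∀ k : ℕ, k ≤ w → PowerSeries.coeff (R := B) k f = PowerSeries.coeff (R := B) k PowerSeries.X}

/-! ### Auxiliary machinery -/

section Aux

variable {A : Type*} [CommRing A] {B : Type*} [CommRing B] {B' : Type*} [CommRing B']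

lemma mkL_coeff {f : ℤ → B} (h : (Function.support f).IsPWO) : (mkL f).coeff = f := by
  rw [mkL, dif_pos h]

lemma mkL_coeff_self (y : LaurentSeries B) : mkL y.coeff = y := by
  have : (Function.support y.coeff).IsPWO := y.isPWO_support'
  rw [mkL, dif_pos this]

/-- The coefficientwise ring homomorphism on Laurent series. -/
def mapRH (f : A →+* B) : LaurentSeries A →+* LaurentSeries B where
  toFun x := x.map f
  map_zero' := by ext k; simp
  map_one' := HahnSeries.map_one f.toMonoidWithZeroHom
  map_add' x y := HahnSeries.map_add f.toAddMonoidHom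
  map_mul' x y := HahnSeries.map_mul f.toNonUnitalRingHom

lemma mapRH_coeff (f : A →+* B) (x : LaurentSeries A) (k : ℤ) :
    (mapRH f x).coeff k = f (x.coeff k) := rfl

/-- The dilation `s ↦ s^c` ring homomorphism on Laurent series. -/
def dilRH (c : ℕ) (hc : 0 < c) : LaurentSeries B →+* LaurentSeries B :=
  HahnSeries.embDomainRingHom (AddMonoidHom.mulLeft (c : ℤ))
    (mul_right_injective₀ (by exact_mod_cast hc.ne'))
    (fun a b => by
      show (c : ℤ) * a ≤ (c : ℤ) * b ↔ a ≤ b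
      exact mul_le_mul_iff_right₀ (by exact_mod_cast hc))

/-- The substitution ring homomorphism `∑ aᵢ tⁱ ↦ ∑ φ(aᵢ) s^(c i)`. -/
def SRH (φ : A →+* B) (c : ℕ) (hc : 0 < c) : LaurentSeries A →+* LaurentSeries B :=
  (dilRH c hc).comp (mapRH φ)

lemma SRH_coeff (φ : A →+* B) {c : ℕ} (hc : 0 < c) (x : LaurentSeries A) (k : ℤ) :
    (SRH φ c hc x).coeff k = if (c : ℤ) ∣ k then φ (x.coeff (k / c)) else 0 := by
  have hcz : ((c : ℤ)) ≠ 0 := by exact_mod_cast hc.ne'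
  by_cases h : (c : ℤ) ∣ k
  · obtain ⟨j, rfl⟩ := h
    rw [if_pos ⟨j, rfl⟩, Int.mul_ediv_cancel_left _ hcz]
    exact HahnSeries.embDomain_coeff (a := j)
  · rw [if_neg h]
    refine HahnSeries.embDomain_notin_range ?_
    rintro ⟨j, rfl⟩
    exact h ⟨j, rfl⟩

/-- `single c 1` as a unit. -/
def sU (c : ℤ) : (LaurentSeries B)ˣ where
  val := HahnSeries.single c 1
  inv := HahnSeries.single (-c) 1
  val_inv := by rw [HahnSeries.single_mul_single]; simp
  inv_val := by rw [HahnSeries.single_mul_single]; simp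

lemma zpow'_single (c i : ℤ) :
    zpow' (HahnSeries.single c 1 : LaurentSeries B) i = HahnSeries.single (c * i) 1 := by
  rw [zpow']
  split_ifs with h
  · rw [HahnSeries.single_pow, one_pow, nsmul_eq_mul]
    congr 1
    rw [Int.toNat_of_nonneg h, mul_comm]
  · rw [show (HahnSeries.single c 1 : LaurentSeries B) = ((sU c : (LaurentSeries B)ˣ) :
      LaurentSeries B) from rfl, Ring.inverse_unit]
    rw [show (((sU c)⁻¹ : (LaurentSeries B)ˣ) : LaurentSeries B)
      = HahnSeries.single (-c) 1 from rfl]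
    rw [HahnSeries.single_pow, one_pow, nsmul_eq_mul]
    congr 1
    rw [Int.toNat_of_nonneg (by omega : (0:ℤ) ≤ -i)]
    ring

theorem subst_single (φ : A →+* B) (c : ℕ) (hc : 0 < c) (x : LaurentSeries A) :
    subst φ (HahnSeries.single (c : ℤ) 1) x = SRH φ c hc x := by
  have hcz : ((c : ℤ)) ≠ 0 := by exact_mod_cast hc.ne'
  have hfun : (fun k => ∑ᶠ i : ℤ, φ (x.coeff i) *
      (zpow' (HahnSeries.single (c : ℤ) 1) i).coeff k) = (SRH φ c hc x).coeff := by
    funext k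
    rw [SRH_coeff]
    by_cases h : (c : ℤ) ∣ k
    · obtain ⟨j, rfl⟩ := h
      rw [if_pos ⟨j, rfl⟩, Int.mul_ediv_cancel_left _ hcz]
      rw [finsum_eq_single _ j]
      · rw [zpow'_single, HahnSeries.coeff_single_same, mul_one]
      · intro i hi
        rw [zpow'_single, HahnSeries.coeff_single_of_ne (by
          intro hne
          exact hi (mul_left_cancel₀ hcz hne.symm)), mul_zero]
    · rw [if_neg h, finsum_eq_zero_of_forall_eq_zero]
      intro i
      rw [zpow'_single, HahnSeries.coeff_single_of_ne (by
        rintro rfl; exact h ⟨i, rfl⟩), mul_zero]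
  rw [subst, hfun, mkL_coeff_self]

lemma iotaF_eq (n : ℕ) (hn : 0 < n) :
    iotaF A n = ⇑(SRH (Polynomial.C (R := A)) n hn) :=
  funext fun x => subst_single _ n hn x

lemma phiD_eq (d : ℕ) (hd : 0 < d) :
    phiD A d = ⇑(SRH (RingHom.id A) d hd) :=
  funext fun x => subst_single _ d hd x

lemma dvd_pair_iff {a b k : ℤ} (ha : a ≠ 0) : (a ∣ k ∧ b ∣ k / a) ↔ a * b ∣ k := by
  constructor
  · rintro ⟨⟨j, rfl⟩, hb⟩
    rw [Int.mul_ediv_cancel_left _ ha] at hb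
    obtain ⟨i, rfl⟩ := hb
    exact ⟨i, by ring⟩
  · rintro ⟨i, rfl⟩
    refine ⟨⟨b * i, by ring⟩, ?_⟩
    rw [show a * b * i = a * (b * i) by ring, Int.mul_ediv_cancel_left _ ha]
    exact ⟨i, rfl⟩

lemma ediv_ediv' {a b k : ℤ} (ha : a ≠ 0) (hb : b ≠ 0) (h : a * b ∣ k) :
    k / a / b = k / (a * b) := by
  obtain ⟨i, rfl⟩ := h
  rw [Int.mul_ediv_cancel_left _ (mul_ne_zero ha hb),
    show a * b * i = a * (b * i) by ring, Int.mul_ediv_cancel_left _ ha,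
    Int.mul_ediv_cancel_left _ hb]

lemma SRH_comp_SRH (φ₂ : B →+* B') (φ₁ : A →+* B) {c₁ c₂ : ℕ} (h₁ : 0 < c₁) (h₂ : 0 < c₂)
    (x : LaurentSeries A) :
    SRH φ₂ c₂ h₂ (SRH φ₁ c₁ h₁ x) = SRH (φ₂.comp φ₁) (c₁ * c₂) (mul_pos h₁ h₂) x := by
  have h1z : ((c₁ : ℤ)) ≠ 0 := by exact_mod_cast h₁.ne'
  have h2z : ((c₂ : ℤ)) ≠ 0 := by exact_mod_cast h₂.ne'
  ext k
  rw [SRH_coeff φ₂ h₂, SRH_coeff (φ₂.comp φ₁) (mul_pos h₁ h₂)]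
  by_cases h : ((c₁ * c₂ : ℕ) : ℤ) ∣ k
  · have h' : (c₂ : ℤ) * (c₁ : ℤ) ∣ k := by
      rw [mul_comm]; exact_mod_cast h
    have hpair := (dvd_pair_iff (b := (c₁ : ℤ)) h2z).2 h'
    rw [if_pos hpair.1, SRH_coeff φ₁ h₁, if_pos hpair.2, if_pos h]
    rw [ediv_ediv' h2z h1z h', RingHom.comp_apply]
    congr 2
    push_cast
    ring
  · rw [if_neg h]
    by_cases h2 : (c₂ : ℤ) ∣ k
    · rw [if_pos h2, SRH_coeff φ₁ h₁, if_neg (by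
        intro h1
        refine h ?_
        have := (dvd_pair_iff (b := (c₁ : ℤ)) h2z).1 ⟨h2, h1⟩
        rw [mul_comm] at this
        exact_mod_cast this), map_zero]
    · rw [if_neg h2]

end Aux
section Aux2

variable {A : Type*} [CommRing A] {B : Type*} [CommRing B] {B' : Type*} [CommRing B']

lemma isPWO_Ici (a : ℤ) : (Set.Ici a).IsPWO := by
  have h1 : ((Set.univ : Set ℕ)).IsPWO :=
    ((Set.isWF_univ_iff).2 inferInstance).isPWO
  have h2 := h1.image_of_monotone (f := fun n : ℕ => a + (n : ℤ))
    (fun x y hxy => by simp only []; omega)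
  refine h2.mono ?_
  intro k hk
  have hk' : a ≤ k := hk
  exact ⟨(k - a).toNat, trivial, by
    simp only []
    rw [Int.toNat_of_nonneg (by omega : (0:ℤ) ≤ k - a)]
    ring⟩

lemma supp_pow {y : LaurentSeries B} {a : ℤ} (hy : y.support ⊆ Set.Ici a) (k : ℕ) :
    (y ^ k).support ⊆ Set.Ici ((k : ℤ) * a) := by
  induction k with
  | zero =>
    intro g hg
    rw [pow_zero] at hg
    have h1 : (1 : LaurentSeries B) = HahnSeries.single (0 : ℤ) 1 := rfl
    rw [h1] at hg
    have := HahnSeries.support_single_subset hg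
    simp only [Set.mem_singleton_iff] at this
    simp [this]
  | succ k ih =>
    intro g hg
    rw [pow_succ] at hg
    obtain ⟨b, hb, c, hc, rfl⟩ := HahnSeries.support_mul_subset hg
    have h1 := ih hb
    have h2 := hy hc
    simp only [Set.mem_Ici] at h1 h2 ⊢
    push_cast
    nlinarith [h1, h2]

lemma zpow'_coe (U : (LaurentSeries B)ˣ) (i : ℤ) :
    zpow' (U : LaurentSeries B) i = ((U ^ i : (LaurentSeries B)ˣ) : LaurentSeries B) := by
  rw [zpow']
  split_ifs with h
  · have h1 : U ^ i = U ^ i.toNat := by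
      rw [← zpow_natCast, Int.toNat_of_nonneg h]
    rw [h1, Units.val_pow_eq_pow_val]
  · have h1 : U ^ i = U⁻¹ ^ (-i).toNat := by
      rw [← zpow_natCast, Int.toNat_of_nonneg (by omega : (0:ℤ) ≤ -i), inv_zpow,
        ← zpow_neg, neg_neg]
    rw [h1, Units.val_pow_eq_pow_val, Ring.inverse_unit]

lemma supp_zpow' {W : (LaurentSeries B)ˣ} {c : ℤ}
    (hW : (W : LaurentSeries B).support ⊆ Set.Ici c)
    (hWi : ((W⁻¹ : (LaurentSeries B)ˣ) : LaurentSeries B).support ⊆ Set.Ici (-c)) (i : ℤ) :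
    (zpow' (W : LaurentSeries B) i).support ⊆ Set.Ici (c * i) := by
  rw [zpow']
  split_ifs with h
  · have := supp_pow hW i.toNat
    rwa [Int.toNat_of_nonneg h, mul_comm] at this
  · rw [Ring.inverse_unit]
    have := supp_pow hWi (-i).toNat
    rwa [Int.toNat_of_nonneg (by omega : (0:ℤ) ≤ -i),
      show -i * -c = c * i by ring] at this

lemma summand_finite (φ : A →+* B) (x : LaurentSeries A) {W : (LaurentSeries B)ˣ} {c : ℤ}
    (hc : 0 < c)
    (hW : (W : LaurentSeries B).support ⊆ Set.Ici c)
    (hWi : ((W⁻¹ : (LaurentSeries B)ˣ) : LaurentSeries B).support ⊆ Set.Ici (-c)) (k : ℤ) :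
    (Function.support fun i : ℤ =>
      φ (x.coeff i) * (zpow' (W : LaurentSeries B) i).coeff k).Finite := by
  by_cases hx : x = 0
  · simp [hx]
  refine (Set.finite_Icc x.order (k / c)).subset ?_
  intro i hi
  simp only [Function.mem_support] at hi
  have h1 : x.coeff i ≠ 0 := fun h => hi (by rw [h, map_zero, zero_mul])
  have h2 : (zpow' (W : LaurentSeries B) i).coeff k ≠ 0 :=
    fun h => hi (by rw [h, mul_zero])
  have h3 : x.order ≤ i := HahnSeries.order_le_of_coeff_ne_zero h1
  have h4 : c * i ≤ k := supp_zpow' hW hWi i h2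
  refine ⟨h3, ?_⟩
  rw [Int.le_ediv_iff_mul_le hc]
  linarith [h4]

lemma subst_coeff (φ : A →+* B) (x : LaurentSeries A) {W : (LaurentSeries B)ˣ} {c : ℤ}
    (hc : 0 < c)
    (hW : (W : LaurentSeries B).support ⊆ Set.Ici c)
    (hWi : ((W⁻¹ : (LaurentSeries B)ˣ) : LaurentSeries B).support ⊆ Set.Ici (-c)) (k : ℤ) :
    (subst φ (W : LaurentSeries B) x).coeff k
      = ∑ᶠ i : ℤ, φ (x.coeff i) * (zpow' (W : LaurentSeries B) i).coeff k := by
  rw [subst]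
  have hpwo : (Function.support fun k : ℤ => ∑ᶠ i : ℤ,
      φ (x.coeff i) * (zpow' (W : LaurentSeries B) i).coeff k).IsPWO := by
    by_cases hx : x = 0
    · have : (fun k : ℤ => ∑ᶠ i : ℤ,
          φ (x.coeff i) * (zpow' (W : LaurentSeries B) i).coeff k) = fun _ => 0 := by
        funext k; simp [hx]
      rw [this]
      simp
    refine (isPWO_Ici (c * x.order)).mono ?_
    intro k hk
    simp only [Function.mem_support] at hk
    have : ∃ i : ℤ, φ (x.coeff i) * (zpow' (W : LaurentSeries B) i).coeff k ≠ 0 := by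
      by_contra hcon
      push_neg at hcon
      exact hk (finsum_eq_zero_of_forall_eq_zero hcon)
    obtain ⟨i, hi⟩ := this
    have h1 : x.coeff i ≠ 0 := fun h => hi (by rw [h, map_zero, zero_mul])
    have h2 : (zpow' (W : LaurentSeries B) i).coeff k ≠ 0 := fun h => hi (by rw [h, mul_zero])
    have h3 : x.order ≤ i := HahnSeries.order_le_of_coeff_ne_zero h1
    have h4 : c * i ≤ k := supp_zpow' hW hWi i h2
    have h5 : c * x.order ≤ c * i := by nlinarith [h3]
    simp only [Set.mem_Ici]
    linarith
  rw [mkL, dif_pos hpwo]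

end Aux2
section Aux3

variable {A : Type*} [CommRing A] {B : Type*} [CommRing B] {B' : Type*} [CommRing B']

lemma finsum_dvd_reindex {M : Type*} [AddCommMonoid M] (d : ℕ) (hd : 0 < d) (f : ℤ → M)
    (hf : ∀ i : ℤ, ¬ (d : ℤ) ∣ i → f i = 0) : ∑ᶠ i : ℤ, f i = ∑ᶠ j : ℤ, f ((d : ℤ) * j) := by
  have hdz : ((d : ℤ)) ≠ 0 := by exact_mod_cast hd.ne'
  have hinj : Function.Injective (fun j : ℤ => (d : ℤ) * j) := mul_right_injective₀ hdz
  have hsupp : Function.support f ⊆ Set.range (fun j : ℤ => (d : ℤ) * j) := by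
    intro i hi
    by_contra hcon
    refine hi (hf i ?_)
    rintro ⟨j, rfl⟩
    exact hcon ⟨j, rfl⟩
  calc ∑ᶠ i : ℤ, f i = ∑ᶠ i ∈ Set.range (fun j : ℤ => (d : ℤ) * j), f i := by
        rw [finsum_mem_def, Set.indicator_eq_self.2 hsupp]
    _ = ∑ᶠ j : ℤ, f ((d : ℤ) * j) := finsum_mem_range hinj

lemma zpow'_pow_mul (W : (LaurentSeries B)ˣ) (d : ℕ) (j : ℤ) :
    zpow' ((W : LaurentSeries B)) ((d : ℤ) * j)
      = zpow' (((W ^ d : (LaurentSeries B)ˣ)) : LaurentSeries B) j := by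
  rw [zpow'_coe, zpow'_coe]
  congr 1
  rw [← zpow_natCast W d, ← zpow_mul]

lemma compA (φ : A →+* B) (W : (LaurentSeries B)ˣ) (d : ℕ) (hd : 0 < d) (x : LaurentSeries A) :
    subst φ ((W : LaurentSeries B)) (SRH (RingHom.id A) d hd x)
      = subst φ (((W ^ d : (LaurentSeries B)ˣ)) : LaurentSeries B) x := by
  have hdz : ((d : ℤ)) ≠ 0 := by exact_mod_cast hd.ne'
  rw [subst, subst]
  congr 1
  funext k
  rw [finsum_dvd_reindex d hd]
  · refine finsum_congr fun j => ?_
    rw [SRH_coeff _ hd, if_pos ⟨j, rfl⟩, Int.mul_ediv_cancel_left _ hdz,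
      RingHom.id_apply, zpow'_pow_mul]
  · intro i hi
    rw [SRH_coeff _ hd, if_neg hi, map_zero, zero_mul]

lemma SRH_supp_bound (χ : B →+* B') {d : ℕ} (hd : 0 < d) {y : LaurentSeries B} {a : ℤ}
    (hy : y.support ⊆ Set.Ici a) : (SRH χ d hd y).support ⊆ Set.Ici ((d : ℤ) * a) := by
  intro k hk
  have hk' : (SRH χ d hd y).coeff k ≠ 0 := hk
  rw [SRH_coeff _ hd] at hk'
  by_cases h : (d : ℤ) ∣ k
  · obtain ⟨j, rfl⟩ := h
    rw [if_pos ⟨j, rfl⟩, Int.mul_ediv_cancel_left _ (by exact_mod_cast hd.ne' : ((d:ℤ)) ≠ 0)]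
      at hk'
    have h1 : y.coeff j ≠ 0 := fun h0 => hk' (by rw [h0, map_zero])
    have h2 : a ≤ j := hy h1
    simp only [Set.mem_Ici]
    nlinarith [h2, (by exact_mod_cast hd : (0:ℤ) < d)]
  · rw [if_neg h] at hk'
    exact absurd rfl hk'

lemma compB (χ : B →+* B') (φ : A →+* B) {W : (LaurentSeries B)ˣ} {c : ℤ} (hc : 0 < c)
    (hW : (W : LaurentSeries B).support ⊆ Set.Ici c)
    (hWi : ((W⁻¹ : (LaurentSeries B)ˣ) : LaurentSeries B).support ⊆ Set.Ici (-c))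
    (d : ℕ) (hd : 0 < d) (x : LaurentSeries A) :
    SRH χ d hd (subst φ ((W : LaurentSeries B)) x)
      = subst (χ.comp φ)
          ((Units.map (SRH χ d hd).toMonoidHom W : (LaurentSeries B')ˣ) : LaurentSeries B') x := by
  set W' : (LaurentSeries B')ˣ := Units.map (SRH χ d hd).toMonoidHom W with hW'def
  have hW'c : (W' : LaurentSeries B') = SRH χ d hd (W : LaurentSeries B) := rfl
  have hW'i : ((W'⁻¹ : (LaurentSeries B')ˣ) : LaurentSeries B')
      = SRH χ d hd ((W⁻¹ : (LaurentSeries B)ˣ) : LaurentSeries B) := by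
    rw [hW'def, ← map_inv (Units.map (SRH χ d hd).toMonoidHom) W]; rfl
  have hdc : (0:ℤ) < (d : ℤ) * c := by
    have : (0:ℤ) < (d:ℤ) := by exact_mod_cast hd
    nlinarith
  have hbW : (W' : LaurentSeries B').support ⊆ Set.Ici ((d : ℤ) * c) := by
    rw [hW'c]; exact SRH_supp_bound χ hd hW
  have hbWi : ((W'⁻¹ : (LaurentSeries B')ˣ) : LaurentSeries B').support
      ⊆ Set.Ici (-((d : ℤ) * c)) := by
    rw [hW'i, show -((d:ℤ)*c) = (d:ℤ) * (-c) by ring]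
    exact SRH_supp_bound χ hd hWi
  have hzp : ∀ i : ℤ, (zpow' ((W' : LaurentSeries B')) i)
      = SRH χ d hd (zpow' ((W : LaurentSeries B)) i) := by
    intro i
    rw [zpow'_coe, zpow'_coe, hW'def, ← map_zpow (Units.map (SRH χ d hd).toMonoidHom) W i]
    rfl
  ext k
  rw [SRH_coeff _ hd, subst_coeff (χ.comp φ) x hdc hbW hbWi]
  by_cases h : (d : ℤ) ∣ k
  · rw [if_pos h, subst_coeff φ x hc hW hWi]
    have hmap : χ (∑ᶠ i : ℤ, φ (x.coeff i) * (zpow' ((W : LaurentSeries B)) i).coeff (k / ↑d))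
        = ∑ᶠ i : ℤ, χ (φ (x.coeff i) * (zpow' ((W : LaurentSeries B)) i).coeff (k / ↑d)) :=
      AddMonoidHom.map_finsum χ.toAddMonoidHom (by exact summand_finite φ x hc hW hWi (k / ↑d))
    rw [hmap]

    refine finsum_congr fun i => ?_
    rw [map_mul, hzp i, SRH_coeff _ hd, if_pos h, RingHom.comp_apply]
  · rw [if_neg h]
    refine (finsum_eq_zero_of_forall_eq_zero fun i => ?_).symm
    rw [hzp i, SRH_coeff _ hd, if_neg h, mul_zero]

lemma SRH_single (χ : B →+* B') {d : ℕ} (hd : 0 < d) (a : ℤ) (r : B) :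
    SRH χ d hd (HahnSeries.single a r) = HahnSeries.single ((d : ℤ) * a) (χ r) := by
  have hdz : ((d : ℤ)) ≠ 0 := by exact_mod_cast hd.ne'
  ext k
  rw [SRH_coeff _ hd, HahnSeries.coeff_single, HahnSeries.coeff_single, apply_ite χ, map_zero]
  by_cases hk : k = (d : ℤ) * a
  · subst hk
    rw [if_pos ⟨a, rfl⟩, Int.mul_ediv_cancel_left _ hdz, if_pos rfl, if_pos rfl]
  · rw [if_neg hk]
    by_cases h : (d : ℤ) ∣ k
    · obtain ⟨j, rfl⟩ := h
      rw [if_pos ⟨j, rfl⟩, Int.mul_ediv_cancel_left _ hdz,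
        if_neg (fun hja => hk (by rw [hja]))]
    · rw [if_neg h]

end Aux3
section Aux4

variable {A : Type*} [CommRing A] {B : Type*} [CommRing B] {B' : Type*} [CommRing B']

lemma charP_LS (p : ℕ) [CharP B p] : CharP (LaurentSeries B) p := by
  constructor
  intro n
  rw [show ((n : ℕ) : LaurentSeries B) = HahnSeries.C ((n : ℕ) : B) from
    (map_natCast (HahnSeries.C : B →+* LaurentSeries B) n).symm]
  rw [← CharP.cast_eq_zero_iff B p n]
  exact map_eq_zero_iff (HahnSeries.C : B →+* LaurentSeries B) HahnSeries.C_injective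

/-- The `A`-algebra map `A[u] → A[u]`, `u ↦ u^d`. -/
def psiRH (d : ℕ) : Polynomial A →+* Polynomial A :=
  Polynomial.eval₂RingHom (Polynomial.C : A →+* Polynomial A) (Polynomial.X ^ d)

lemma psiRH_C (d : ℕ) (a : A) : psiRH d (Polynomial.C a) = Polynomial.C a :=
  Polynomial.eval₂_C _ _

lemma psiRH_X (d : ℕ) : psiRH (A := A) d Polynomial.X = Polynomial.X ^ d :=
  Polynomial.eval₂_X _ _

lemma psiRH_comp_C (d : ℕ) :
    (psiRH (A := A) d).comp (Polynomial.C : A →+* Polynomial A) = Polynomial.C :=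
  RingHom.ext fun a => psiRH_C d a

lemma psiRH_coeff_mul (q : Polynomial A) {d : ℕ} (hd : 0 < d) (i : ℕ) :
    (psiRH d q).coeff (d * i) = q.coeff i := by
  have hsum : psiRH d q = ∑ e ∈ q.support, Polynomial.C (q.coeff e) * Polynomial.X ^ (d * e) := by
    rw [psiRH, Polynomial.coe_eval₂RingHom, Polynomial.eval₂_eq_sum, Polynomial.sum_def]
    refine Finset.sum_congr rfl fun e _ => ?_
    rw [← pow_mul]
  rw [hsum, Polynomial.finset_sum_coeff]
  rw [Finset.sum_eq_single i]
  · rw [Polynomial.coeff_C_mul, Polynomial.coeff_X_pow, if_pos rfl, mul_one]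
  · intro e _ he
    rw [Polynomial.coeff_C_mul, Polynomial.coeff_X_pow,
      if_neg (fun hde => he (Nat.eq_of_mul_eq_mul_left hd hde.symm)), mul_zero]
  · intro hi
    rw [Polynomial.notMem_support_iff.1 hi, map_zero, zero_mul, Polynomial.coeff_zero]

lemma psiRH_injective {d : ℕ} (hd : 0 < d) :
    Function.Injective ⇑(psiRH (A := A) d) := by
  have hker : ∀ q : Polynomial A, psiRH d q = 0 → q = 0 := by
    intro q hq
    ext i
    rw [← psiRH_coeff_mul q hd i, hq]
    simp
  intro a b hab
  have h0 : psiRH d (a - b) = 0 := by rw [map_sub, hab, sub_self]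
  exact sub_eq_zero.1 (hker _ h0)
  
lemma IsPS_SRH_iff (χ : B →+* B') (hinj : Function.Injective ⇑χ) {d : ℕ} (hd : 0 < d)
    (y : LaurentSeries B) : IsPS (SRH χ d hd y) ↔ IsPS y := by
  have hdz : ((d : ℤ)) ≠ 0 := by exact_mod_cast hd.ne'
  have hdpos : (0 : ℤ) < (d : ℤ) := by exact_mod_cast hd
  constructor
  · intro h k hk
    have h1 := h ((d : ℤ) * k) (by nlinarith)
    rw [SRH_coeff _ hd, if_pos ⟨k, rfl⟩, Int.mul_ediv_cancel_left _ hdz] at h1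
    exact hinj (by rw [h1, map_zero])
  · intro h k hk
    rw [SRH_coeff _ hd]
    by_cases hdvd : (d : ℤ) ∣ k
    · rw [if_pos hdvd]
      have hmod := Int.mul_ediv_add_emod k (d : ℤ)
      have hmn := Int.emod_nonneg k hdz
      have hkd : k / (d : ℤ) < 0 := by
        by_contra hcon
        push_neg at hcon
        nlinarith
      rw [h _ hkd, map_zero]
    · rw [if_neg hdvd]

lemma matrix_inv_map {R S : Type*} [CommRing R] [CommRing S] (f : R →+* S) {n : ℕ}
    (M : Matrix (Fin n) (Fin n) R) (h : M.det = 1) : (M.map ⇑f)⁻¹ = M⁻¹.map ⇑f := by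
  have hdet : (M.map ⇑f).det = 1 := by
    rw [← RingHom.mapMatrix_apply, ← RingHom.map_det, h, map_one]
  rw [Matrix.inv_def, Matrix.inv_def, hdet, h, Ring.inverse_one, one_smul,
    Ring.inverse_one, one_smul, ← RingHom.mapMatrix_apply, ← RingHom.map_adjugate,
    RingHom.mapMatrix_apply]

end Aux4
section Aux5

variable {A : Type*} [CommRing A]

lemma charP_Poly (p : ℕ) [CharP A p] : CharP (Polynomial A) p := by
  constructor
  intro n
  rw [show ((n : ℕ) : Polynomial A) = Polynomial.C ((n : ℕ) : A) from
    (map_natCast (Polynomial.C : A →+* Polynomial A) n).symm]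
  rw [← CharP.cast_eq_zero_iff A p n]
  exact map_eq_zero_iff (Polynomial.C : A →+* Polynomial A) Polynomial.C_injective

lemma ofPS_supp {B : Type*} [CommRing B] (y : PowerSeries B) :
    (HahnSeries.ofPowerSeries ℤ B y).support ⊆ Set.Ici (0 : ℤ) := by
  intro g hg
  rw [HahnSeries.ofPowerSeries_apply] at hg
  obtain ⟨a, _, rfl⟩ := HahnSeries.support_embDomain_subset hg
  show (0 : ℤ) ≤ (a : ℤ)
  exact Int.natCast_nonneg a

variable (A) in
/-- The power series `1 + u s^m`. -/
def qPS (m : ℕ) : PowerSeries (Polynomial A) :=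
  1 + PowerSeries.C (R := Polynomial A) Polynomial.X * PowerSeries.X ^ m

lemma qPS_isUnit (m : ℕ) (hm : 0 < m) : IsUnit (qPS A m) := by
  rw [PowerSeries.isUnit_iff_constantCoeff, qPS, map_add, map_one, map_mul,
    PowerSeries.constantCoeff_C, map_pow, PowerSeries.constantCoeff_X,
    zero_pow hm.ne', mul_zero, add_zero]
  exact isUnit_one

variable (A) in
/-- The element `s^n (1 + u s^m)` as a unit of `(A[u])((s))`. -/
def WU (m n : ℕ) (hm : 0 < m) : (LaurentSeries (Polynomial A))ˣ :=
  sU (n : ℤ) *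
    Units.map (HahnSeries.ofPowerSeries ℤ (Polynomial A)).toMonoidHom (qPS_isUnit m hm).unit

lemma WU_val (m n : ℕ) (hm : 0 < m) :
    ((WU A m n hm : (LaurentSeries (Polynomial A))ˣ) : LaurentSeries (Polynomial A))
      = HahnSeries.single (n : ℤ) 1
        + HahnSeries.single ((n : ℤ) + (m : ℤ)) Polynomial.X := by
  rw [WU, Units.val_mul]
  have h1 : ((Units.map (HahnSeries.ofPowerSeries ℤ (Polynomial A)).toMonoidHom
      (qPS_isUnit m hm).unit : (LaurentSeries (Polynomial A))ˣ) : LaurentSeries (Polynomial A))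
      = HahnSeries.ofPowerSeries ℤ (Polynomial A) (qPS A m) := by
    rw [Units.coe_map, IsUnit.unit_spec]; rfl
  rw [h1, qPS, map_add, map_one, map_mul, HahnSeries.ofPowerSeries_C,
    HahnSeries.ofPowerSeries_X_pow]
  rw [show ((sU (n:ℤ) : (LaurentSeries (Polynomial A))ˣ) : LaurentSeries (Polynomial A))
    = HahnSeries.single (n : ℤ) 1 from rfl]
  rw [mul_add, mul_one]
  congr 1
  rw [show (HahnSeries.C (Polynomial.X : Polynomial A) : LaurentSeries (Polynomial A))
    = HahnSeries.single (0 : ℤ) Polynomial.X from rfl]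
  rw [HahnSeries.single_mul_single, HahnSeries.single_mul_single]
  rw [zero_add, one_mul, mul_one]

lemma WU_supp (m n : ℕ) (hm : 0 < m) :
    ((WU A m n hm : (LaurentSeries (Polynomial A))ˣ) :
      LaurentSeries (Polynomial A)).support ⊆ Set.Ici (n : ℤ) := by
  rw [WU_val]
  intro g hg
  rcases HahnSeries.support_add_subset _ _ hg with h | h
  · have := HahnSeries.support_single_subset h
    simp only [Set.mem_singleton_iff] at this
    simp [this]
  · have := HahnSeries.support_single_subset h
    simp only [Set.mem_singleton_iff] at this
    simp only [Set.mem_Ici, this]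
    omega

lemma WU_inv_supp (m n : ℕ) (hm : 0 < m) :
    (((WU A m n hm)⁻¹ : (LaurentSeries (Polynomial A))ˣ) :
      LaurentSeries (Polynomial A)).support ⊆ Set.Ici (-(n : ℤ)) := by
  rw [WU, mul_inv_rev, Units.val_mul]
  have h1 : (((Units.map (HahnSeries.ofPowerSeries ℤ (Polynomial A)).toMonoidHom
      (qPS_isUnit m hm).unit)⁻¹ : (LaurentSeries (Polynomial A))ˣ) :
      LaurentSeries (Polynomial A))
      = HahnSeries.ofPowerSeries ℤ (Polynomial A) (((qPS_isUnit m hm).unit⁻¹ :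
          (PowerSeries (Polynomial A))ˣ) : PowerSeries (Polynomial A)) := by
    rw [← map_inv (Units.map (HahnSeries.ofPowerSeries ℤ (Polynomial A)).toMonoidHom)]
    rfl
  rw [h1]
  intro g hg
  obtain ⟨b, hb, c, hc, rfl⟩ := HahnSeries.support_mul_subset hg
  have hb' := ofPS_supp _ hb
  have hc' := HahnSeries.support_single_subset
    (hc : c ∈ ((( (sU (n:ℤ))⁻¹ : (LaurentSeries (Polynomial A))ˣ) :
      LaurentSeries (Polynomial A))).support)
  simp only [Set.mem_singleton_iff] at hc'
  simp only [Set.mem_Ici] at hb' ⊢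
  omega

end Aux5
section Aux6

variable {A : Type*} [CommRing A]

lemma thetaW (p : ℕ) (hp : p.Prime) [CharP A p] (e m n : ℕ) (hm : 0 < m)
    (hd : 0 < p ^ e) :
    SRH (psiRH (A := A) (p ^ e)) (p ^ e) hd
        ((WU A m n hm : (LaurentSeries (Polynomial A))ˣ) : LaurentSeries (Polynomial A))
      = (((WU A m n hm) ^ (p ^ e) : (LaurentSeries (Polynomial A))ˣ) :
          LaurentSeries (Polynomial A)) := by
  haveI : Fact p.Prime := ⟨hp⟩
  haveI : CharP (Polynomial A) p := charP_Poly p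
  haveI : CharP (LaurentSeries (Polynomial A)) p := charP_LS p
  rw [Units.val_pow_eq_pow_val, WU_val, map_add, SRH_single _ hd, SRH_single _ hd,
    add_pow_char_pow, HahnSeries.single_pow, HahnSeries.single_pow, one_pow,
    psiRH_X, map_one]
  congr 2 <;> rw [nsmul_eq_mul] <;> push_cast <;> ring

lemma SRH_c_congr {B : Type*} [CommRing B] (φ : A →+* B) {c c' : ℕ} (h : c = c')
    (hc : 0 < c) (hc' : 0 < c') : SRH φ c hc = SRH φ c' hc' := by subst h; rfl

lemma claim_iota (d : ℕ) (hd : 0 < d) (n : ℕ) (hn : 0 < n) (x : LaurentSeries A) :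
    iotaF A n (phiD A d x) = SRH (psiRH (A := A) d) d hd (iotaF A n x) := by
  rw [iotaF_eq n hn, phiD_eq d hd, SRH_comp_SRH Polynomial.C (RingHom.id A) hd hn x,
    SRH_comp_SRH (psiRH (A := A) d) Polynomial.C hn hd x, RingHom.comp_id, psiRH_comp_C,
    SRH_c_congr Polynomial.C (Nat.mul_comm d n) (mul_pos hd hn) (mul_pos hn hd)]

lemma claim_sigma (p : ℕ) (hp : p.Prime) [CharP A p] (e m n : ℕ) (hm : 0 < m) (hn : 0 < n)
    (hd : 0 < p ^ e) (x : LaurentSeries A) :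
    sigmaF A m n (phiD A (p ^ e) x)
      = SRH (psiRH (A := A) (p ^ e)) (p ^ e) hd (sigmaF A m n x) := by
  have hw : (HahnSeries.single (n : ℤ) 1
      + HahnSeries.single ((n : ℤ) + (m : ℤ)) Polynomial.X : LaurentSeries (Polynomial A))
      = ((WU A m n hm : (LaurentSeries (Polynomial A))ˣ) : LaurentSeries (Polynomial A)) :=
    (WU_val m n hm).symm
  rw [sigmaF, hw, phiD_eq (p ^ e) hd, compA Polynomial.C (WU A m n hm) (p ^ e) hd x,
    compB (psiRH (A := A) (p ^ e)) Polynomial.C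
      (show (0 : ℤ) < (n : ℤ) by exact_mod_cast hn) (WU_supp m n hm) (WU_inv_supp m n hm)
      (p ^ e) hd x, psiRH_comp_C]
  congr 1
  rw [Units.coe_map]
  exact (thetaW p hp e m n hm hd).symm

end Aux6
/-- If `A` is an `𝔽_p`-algebra and `d = p^e`, then for
`g ∉ SL_N(A[[t]])` one has `φ_{d,*}(g) ∉ SL_N(A[[t]])` and `Σ(φ_{d,*}(g)) = Σ(g)`, so
`r(φ_{d,*}(g)) = r(g)`. -/
theorem statement10 {A : Type*} [CommRing A] {N : ℕ} (hN : 1 ≤ N)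
    (p : ℕ) (hp : p.Prime) [CharP A p] (e : ℕ)
    (g : Matrix (Fin N) (Fin N) (LaurentSeries A)) (hdet : g.det = 1)
    (hg : ¬ ∀ i j, IsPS (g i j)) :
    (¬ ∀ i j, IsPS ((g.map (phiD A (p ^ e))) i j)) ∧
      SigmaSet (g.map (phiD A (p ^ e))) = SigmaSet g := by
  have hd : 0 < p ^ e := pow_pos hp.pos e
  have hdz : ((p ^ e : ℕ) : ℤ) ≠ 0 := by exact_mod_cast hd.ne'
  have hdpos : (0 : ℤ) < ((p ^ e : ℕ) : ℤ) := by exact_mod_cast hd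
  constructor
  · intro H
    obtain ⟨i, hi⟩ := not_forall.1 hg
    obtain ⟨j, hj⟩ := not_forall.1 hi
    rw [IsPS] at hj
    push_neg at hj
    obtain ⟨k, hk, hco⟩ := hj
    have H1 := H i j (((p ^ e : ℕ) : ℤ) * k) (by nlinarith)
    rw [Matrix.map_apply, phiD_eq (p ^ e) hd, SRH_coeff _ hd, if_pos ⟨k, rfl⟩,
      Int.mul_ediv_cancel_left _ hdz, RingHom.id_apply] at H1
    exact hco H1
  · ext r
    simp only [SigmaSet, Set.mem_setOf_eq]
    refine and_congr_right fun hr => ?_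
    have hm : 0 < r.num.toNat := by
      have := Rat.num_pos.2 hr
      omega
    have hn : 0 < r.den := r.pos
    set m := r.num.toNat
    set n := r.den
    have hdet_iota : (g.map (iotaF A n)).det = 1 := by
      rw [iotaF_eq n hn, ← RingHom.mapMatrix_apply, ← RingHom.map_det, hdet, map_one]
    have hmap1 : (g.map (phiD A (p ^ e))).map (iotaF A n)
        = (g.map (iotaF A n)).map ⇑(SRH (psiRH (A := A) (p ^ e)) (p ^ e) hd) := by
      rw [Matrix.map_map, Matrix.map_map]
      exact congrArg g.map (funext fun x => claim_iota (p ^ e) hd n hn x)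
    have hmap2 : (g.map (phiD A (p ^ e))).map (sigmaF A m n)
        = (g.map (sigmaF A m n)).map ⇑(SRH (psiRH (A := A) (p ^ e)) (p ^ e) hd) := by
      rw [Matrix.map_map, Matrix.map_map]
      exact congrArg g.map (funext fun x => claim_sigma p hp e m n hm hn hd x)
    have hE : hmat (g.map (phiD A (p ^ e))) m n
        = (hmat g m n).map ⇑(SRH (psiRH (A := A) (p ^ e)) (p ^ e) hd) := by
      rw [hmat, hmat, hmap1, hmap2, matrix_inv_map _ _ hdet_iota, ← Matrix.map_mul]
    rw [hE]
    constructor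
    · intro h i j
      have h1 := h i j
      rw [Matrix.map_apply] at h1
      exact (IsPS_SRH_iff _ (psiRH_injective hd) hd _).1 h1
    · intro h i j
      rw [Matrix.map_apply]
      exact (IsPS_SRH_iff _ (psiRH_injective hd) hd _).2 (h i j)

end ResidueIndex

end
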